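/- For every integer p ≥ 2 and all integers 0 ≤ k < n, the number of unordered forests on [n] consisting of k p-ary labeled trees equals f(n,k) = binom(n, k) · pk · ∏_{i=1}^{n−k−1} (pn − i), where the empty product is 1; in particular f(n,0) = 0 for n > 0. -/

import Mathlib

/-!
Cutting the edge from a non-root vertex `v` to its parent slot `ws` turns a forest with `k` trees
into one with `k + 1` trees, together with a free slot `ws` and a root `v` whose tree does not
contain `ws`; grafting `v` into `ws` undoes the cut. A forest with `k` trees on `n` vertices has
`n - k` edges, while a forest with `k + 1` trees has `n p - (n - k - 1)` free slots and, for each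
slot, `k` roots outside the tree of that slot. Hence
`f(n,k) (n - k) = f(n,k+1) (n p - (n - k - 1)) k`, which together with `f(n,n) = 1` determines
`f(n,k)` for `k < n`; the closed form satisfies the recurrence because
`C(n,k+1) (k+1) = C(n,k) (n-k)`.
-/

open scoped Classical

/-- A `p`-ary labeled forest: a finite set of vertices (labels, which are
natural numbers), where each non-root vertex has a parent together with a
slot position in `Fin p` (the `p` ordered, possibly empty, child positions),
each (parent, slot) pair is occupied by at most one child, and every vertex
reaches a root (a vertex with no parent) by iterating the parent map. -/
structure PForest (p : ℕ) where
  verts : Finset ℕ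
  par : ℕ → Option (ℕ × Fin p)
  par_eq_none_of_not_mem : ∀ v, v ∉ verts → par v = none
  par_mem : ∀ v ∈ verts, ∀ w s, par v = some (w, s) → w ∈ verts
  par_inj : ∀ u ∈ verts, ∀ v ∈ verts, ∀ w s,
      par u = some (w, s) → par v = some (w, s) → u = v
  reaches_root : ∀ v ∈ verts,
      ∃ k, par ((fun x => ((par x).map Prod.fst).getD x)^[k] v) = none

namespace PForest

variable {p : ℕ}

/-- One step from a vertex towards the root (identity on roots and
non-vertices). -/
def step (T : PForest p) (v : ℕ) : ℕ := ((T.par v).map Prod.fst).getD v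

/-- The roots of the forest: vertices with no parent. -/
def roots (T : PForest p) : Finset ℕ := T.verts.filter (fun v => T.par v = none)

/-- `v` belongs to the maximal decreasing subtree `MD(T)`: every edge on the
path from `v` up to its root goes from a smaller label (child) to a larger
label (parent). -/
def InMD (T : PForest p) (v : ℕ) : Prop :=
  v ∈ T.verts ∧ ∀ k w s, T.par (T.step^[k] v) = some (w, s) → T.step^[k] v < w

/-- The vertex set of the maximal decreasing subtree `MD(T)`. -/
noncomputable def mdSet (T : PForest p) : Finset ℕ :=
  T.verts.filter (fun v => T.InMD v)

/-- `T` is a `p`-ary labeled tree on `[n] = {1, …, n}`: its vertex set is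
`{1, …, n}` and it has exactly one root (and no root when `n = 0`, i.e. the
empty tree). -/
def IsTreeOn (T : PForest p) (n : ℕ) : Prop :=
  T.verts = Finset.Icc 1 n ∧ T.roots.card = min n 1

/-- `v` is a leaf of `T`: it has no children. -/
def IsLeaf (T : PForest p) (v : ℕ) : Prop := ∀ u s, T.par u ≠ some (v, s)

end PForest

/-- `t(n,k)`: the number of `p`-ary labeled trees on `[n]` whose maximal
decreasing subtree has exactly `k` vertices. -/
noncomputable def t (p n k : ℕ) : ℕ :=
  Nat.card {T : PForest p // T.IsTreeOn n ∧ T.mdSet.card = k}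

/-- `y(n,k)`: the number of `p`-ary labeled trees on `[n]` whose maximal
decreasing subtree has exactly `k` vertices and all of whose remaining
`n - k` vertices are (increasing) leaves; equivalently, trees obtained by
attaching `n - k` increasing leaves to a decreasing tree with `k` vertices. -/
noncomputable def y (p n k : ℕ) : ℕ :=
  Nat.card {T : PForest p // T.IsTreeOn n ∧ T.mdSet.card = k ∧
    ∀ v ∈ T.verts, ¬ T.InMD v → T.IsLeaf v}

/-- `f(n,k)`: the number of (unordered) forests on `[n]` consisting of `k`
`p`-ary labeled trees. -/
noncomputable def f (p n k : ℕ) : ℕ :=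
  Nat.card {T : PForest p // T.verts = Finset.Icc 1 n ∧ T.roots.card = k}

open Finset Function

theorem Nat.card_subtype_prod_mem_eq_mul {α β : Type*} (P : α → Prop) [Finite {a // P a}]
    (F : α → Finset β) {c : ℕ} (hF : ∀ a, P a → #(F a) = c) :
    Nat.card {x : α × β // P x.1 ∧ x.2 ∈ F x.1} = Nat.card {a // P a} * c := by
  let e : {x : α × β // P x.1 ∧ x.2 ∈ F x.1} ≃ Σ a : {a // P a}, F a.1 :=
    { toFun x := ⟨⟨x.1.1, x.2.1⟩, ⟨x.1.2, x.2.2⟩⟩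
      invFun y := ⟨(y.1.1, y.2.1), y.1.2, y.2.2⟩
      left_inv _ := rfl
      right_inv _ := rfl }
  cases nonempty_fintype {a // P a}
  rw [Nat.card_congr e, Nat.card_sigma, Nat.card_eq_fintype_card]
  simp only [Nat.card_eq_finsetCard, fun a : {a // P a} => hF a.1 a.2, sum_const, Finset.card_univ,
    smul_eq_mul]

namespace Function

variable {α : Type*} {σ τ : α → α} {x v : α} {i j n : ℕ}

theorem iterate_eq_of_isFixedPt_iterate (hfix : IsFixedPt σ (σ^[i] x)) (hij : i ≤ j) :
    σ^[j] x = σ^[i] x := by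
  obtain ⟨d, rfl⟩ := Nat.exists_eq_add_of_le hij
  rw [add_comm, iterate_add_apply, (hfix.iterate d).eq]

theorem iterate_eq_iterate_of_isFixedPt (hi : IsFixedPt σ (σ^[i] x))
    (hj : IsFixedPt σ (σ^[j] x)) : σ^[i] x = σ^[j] x := by
  rcases le_total i j with hij | hji
  · exact (iterate_eq_of_isFixedPt_iterate hi hij).symm
  · exact iterate_eq_of_isFixedPt_iterate hj hji

theorem IsPeriodicPt.iterate_eq_self_of_isFixedPt (hx : IsPeriodicPt σ n x) (hn : 0 < n)
    (hfix : IsFixedPt σ (σ^[i] x)) : σ^[i] x = x :=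
  calc σ^[i] x = σ^[n * i] x :=
        (iterate_eq_of_isFixedPt_iterate hfix (Nat.le_mul_of_pos_left i hn)).symm
    _ = x := (hx.mul_const i).eq

theorem exists_iterate_eq_of_eqOn_compl (h : Set.EqOn τ σ {v}ᶜ) (hn : σ^[n] x = v) :
    ∃ m, τ^[m] x = v := by
  induction n generalizing x with
  | zero => exact ⟨0, hn⟩
  | succ n ih =>
    by_cases hx : x = v
    · exact ⟨0, hx⟩
    · obtain ⟨m, hm⟩ := ih (x := σ x) hn
      exact ⟨m + 1, by rw [iterate_succ_apply, h hx, hm]⟩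

theorem iterate_eq_of_eqOn_compl (h : Set.EqOn τ σ {v}ᶜ) (hx : ∀ m, σ^[m] x ≠ v) (n : ℕ) :
    τ^[n] x = σ^[n] x := by
  induction n generalizing x with
  | zero => rfl
  | succ n ih =>
    rw [iterate_succ_apply, iterate_succ_apply, h (show x ≠ v from hx 0), ih fun m => hx (m + 1)]

end Function

namespace PForest

variable {p : ℕ} {T : PForest p} {u v w r : ℕ} {ws : ℕ × Fin p} {e : ℕ × (ℕ × Fin p)}

theorem ext {T T' : PForest p} (hverts : T.verts = T'.verts) (hpar : T.par = T'.par) :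
    T = T' := by
  cases T; cases T'; cases hverts; cases hpar; rfl

theorem mem_verts_of_par_eq_some (h : T.par v = some ws) : v ∈ T.verts := by
  by_contra hv
  simp [T.par_eq_none_of_not_mem v hv] at h

theorem mem_roots : v ∈ T.roots ↔ v ∈ T.verts ∧ T.par v = none := mem_filter

theorem step_of_par_eq_some (h : T.par v = some ws) : T.step v = ws.1 := by
  simp [step, h]

theorem isFixedPt_step_of_mem_roots (hr : r ∈ T.roots) : IsFixedPt T.step r := by
  simp [IsFixedPt, step, (mem_roots.1 hr).2]

theorem step_mem (hv : v ∈ T.verts) : T.step v ∈ T.verts := by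
  rcases h : T.par v with _ | ws
  · simpa [step, h] using hv
  · rw [step_of_par_eq_some h]
    exact T.par_mem v hv _ _ h

theorem iterate_step_mem (hv : v ∈ T.verts) (n : ℕ) : T.step^[n] v ∈ T.verts := by
  induction n generalizing v with
  | zero => exact hv
  | succ n ih => exact ih (step_mem hv)

def Reaches (T : PForest p) (u v : ℕ) : Prop := ∃ n, T.step^[n] u = v

theorem exists_reaches_root (hu : u ∈ T.verts) : ∃ r ∈ T.roots, T.Reaches u r :=
  let ⟨n, hn⟩ := T.reaches_root u hu
  ⟨_, mem_roots.2 ⟨iterate_step_mem hu n, hn⟩, n, rfl⟩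

theorem eq_of_reaches_root {r' : ℕ} (h : T.Reaches u r) (h' : T.Reaches u r')
    (hr : r ∈ T.roots) (hr' : r' ∈ T.roots) : r = r' := by
  obtain ⟨i, rfl⟩ := h
  obtain ⟨j, rfl⟩ := h'
  exact iterate_eq_iterate_of_isFixedPt (isFixedPt_step_of_mem_roots hr)
    (isFixedPt_step_of_mem_roots hr')

theorem not_reaches_of_par_eq_some (h : T.par v = some ws) : ¬ T.Reaches ws.1 v := by
  rintro ⟨m, hm⟩
  obtain ⟨r, hr, i, rfl⟩ := T.exists_reaches_root (mem_verts_of_par_eq_some h)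
  have hper : IsPeriodicPt T.step (m + 1) v := by
    rw [IsPeriodicPt, IsFixedPt, iterate_succ_apply, step_of_par_eq_some h, hm]
  rw [hper.iterate_eq_self_of_isFixedPt m.succ_pos (isFixedPt_step_of_mem_roots hr)] at hr
  simp [(mem_roots.1 hr).2] at h

theorem card_roots_filter_not_reaches (hw : w ∈ T.verts) :
    #(T.roots.filter (¬ T.Reaches w ·)) = #T.roots - 1 := by
  obtain ⟨r, hr, hwr⟩ := T.exists_reaches_root hw
  have hreach : T.roots.filter (T.Reaches w) = {r} := by
    ext r'
    simp only [mem_filter, mem_singleton]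
    exact ⟨fun h => (T.eq_of_reaches_root hwr h.2 hr h.1).symm, fun h => h ▸ ⟨hr, hwr⟩⟩
  have := T.roots.card_filter_add_card_filter_not (T.Reaches w)
  rw [hreach, card_singleton] at this
  omega

def edges (T : PForest p) : Finset (ℕ × (ℕ × Fin p)) :=
  (T.verts ×ˢ (T.verts ×ˢ univ)).filter fun e => T.par e.1 = some e.2

noncomputable def freeSlots (T : PForest p) : Finset (ℕ × Fin p) :=
  (T.verts ×ˢ univ).filter fun ws => ∀ v, T.par v ≠ some ws

noncomputable def graftable (T : PForest p) : Finset (ℕ × (ℕ × Fin p)) :=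
  (T.roots ×ˢ T.freeSlots).filter fun e => ¬ T.Reaches e.2.1 e.1

theorem mem_edges : e ∈ T.edges ↔ T.par e.1 = some e.2 := by
  refine ⟨fun he => (mem_filter.1 he).2, fun h => mem_filter.2 ⟨?_, h⟩⟩
  exact mem_product.2 ⟨mem_verts_of_par_eq_some h,
    mem_product.2 ⟨T.par_mem _ (mem_verts_of_par_eq_some h) _ _ h, mem_univ _⟩⟩

theorem mem_freeSlots : ws ∈ T.freeSlots ↔ ws.1 ∈ T.verts ∧ ∀ v, T.par v ≠ some ws := by
  simp [freeSlots]

theorem mem_graftable :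
    e ∈ T.graftable ↔ e.1 ∈ T.roots ∧ e.2 ∈ T.freeSlots ∧ ¬ T.Reaches e.2.1 e.1 := by
  simp [graftable, and_assoc]

theorem card_edges : #T.edges = #T.verts - #T.roots := by
  have hroots : T.roots ⊆ T.verts := filter_subset _ _
  rw [← card_sdiff_of_subset hroots]
  refine card_bij (fun e _ => e.1) (fun e he => ?_) (fun e he e' he' h => ?_) (fun v hv => ?_)
  · rw [mem_edges] at he
    exact mem_sdiff.2 ⟨mem_verts_of_par_eq_some he, fun hr => by simp [(mem_roots.1 hr).2] at he⟩
  · rw [mem_edges] at he he'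
    exact Prod.ext h (Option.some_injective _ (he.symm.trans (h ▸ he')))
  · obtain ⟨hv, hr⟩ := mem_sdiff.1 hv
    obtain ⟨ws, hws⟩ := Option.ne_none_iff_exists'.1 fun h => hr (mem_roots.2 ⟨hv, h⟩)
    exact ⟨(v, ws), mem_edges.2 hws, rfl⟩

theorem card_freeSlots : #T.freeSlots = #T.verts * p - (#T.verts - #T.roots) := by
  have hoccupied : #((T.verts ×ˢ univ).filter fun ws => ¬ ∀ v, T.par v ≠ some ws) = #T.edges := by
    symm
    refine card_bij (fun e _ => e.2) (fun e he => ?_) (fun e he e' he' h => ?_) (fun ws hws => ?_)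
    · rw [mem_edges] at he
      exact mem_filter.2 ⟨mem_product.2 ⟨T.par_mem _ (mem_verts_of_par_eq_some he) _ _ he,
        mem_univ _⟩, fun hfree => hfree e.1 he⟩
    · rw [mem_edges] at he he'
      exact Prod.ext (T.par_inj _ (mem_verts_of_par_eq_some he) _ (mem_verts_of_par_eq_some he')
        _ _ he (he'.trans (congrArg some h.symm))) h
    · obtain ⟨v, hv⟩ := not_forall_not.1 (mem_filter.1 hws).2
      exact ⟨(v, ws), mem_edges.2 hv, rfl⟩
  have := (T.verts ×ˢ univ).card_filter_add_card_filter_not fun ws => ∀ v, T.par v ≠ some ws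
  rw [hoccupied, card_edges, card_product, card_univ, Fintype.card_fin] at this
  rw [freeSlots]
  omega

theorem card_graftable : #T.graftable = #T.freeSlots * (#T.roots - 1) := by
  rw [graftable, card_filter, sum_product_right]
  refine sum_const_nat fun ws hws => ?_
  rw [← card_roots_filter_not_reaches (mem_freeSlots.1 hws).1, card_filter]

section Reparent

variable {par' : ℕ → Option (ℕ × Fin p)}

/- `T.step = stepOf T.par`. Stated for a bare parent map, so that the `reaches_root` field of a
forest obtained by changing one parent of `T` can be proved before that forest exists. -/
def stepOf (par' : ℕ → Option (ℕ × Fin p)) (x : ℕ) : ℕ := ((par' x).map Prod.fst).getD x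

theorem eqOn_stepOf (hpar : ∀ u ≠ v, par' u = T.par u) : Set.EqOn (stepOf par') T.step {v}ᶜ :=
  fun x hx => by simp only [stepOf, step, hpar x hx]

theorem exists_par_iterate_eq_none_of_not_reaches (hpar : ∀ u ≠ v, par' u = T.par u)
    (hu : u ∈ T.verts) (huv : ¬ T.Reaches u v) : ∃ k, par' ((stepOf par')^[k] u) = none := by
  obtain ⟨r, hr, n, rfl⟩ := T.exists_reaches_root hu
  refine ⟨n, ?_⟩
  rw [iterate_eq_of_eqOn_compl (eqOn_stepOf hpar) (fun m hm => huv ⟨m, hm⟩),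
    hpar _ fun h => huv ⟨n, h⟩]
  exact (mem_roots.1 hr).2

theorem exists_par_iterate_eq_none (hpar : ∀ u ≠ v, par' u = T.par u)
    (hv : ∃ k, par' ((stepOf par')^[k] v) = none) (hu : u ∈ T.verts) :
    ∃ k, par' ((stepOf par')^[k] u) = none := by
  by_cases huv : T.Reaches u v
  · obtain ⟨n, hn⟩ := huv
    obtain ⟨m, hm⟩ := exists_iterate_eq_of_eqOn_compl (eqOn_stepOf hpar) hn
    obtain ⟨k, hk⟩ := hv
    exact ⟨k + m, by rwa [iterate_add_apply, hm]⟩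
  · exact exists_par_iterate_eq_none_of_not_reaches hpar hu huv

end Reparent

def cut (T : PForest p) (v : ℕ) : PForest p where
  verts := T.verts
  par u := if u = v then none else T.par u
  par_eq_none_of_not_mem u hu := by
    split_ifs
    · rfl
    · exact T.par_eq_none_of_not_mem u hu
  par_mem u hu w s h := by
    split_ifs at h
    exact T.par_mem u hu w s h
  par_inj u hu u' hu' w s h h' := by
    split_ifs at h h'
    exact T.par_inj u hu u' hu' w s h h'
  reaches_root _ hu := exists_par_iterate_eq_none (fun _ h => if_neg h) ⟨0, if_pos rfl⟩ hu

def graft (T : PForest p) (e : ℕ × (ℕ × Fin p)) (he : e ∈ T.graftable) : PForest p where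
  verts := T.verts
  par u := if u = e.1 then some e.2 else T.par u
  par_eq_none_of_not_mem u hu := by
    have hv := (mem_roots.1 (mem_graftable.1 he).1).1
    rw [if_neg fun h : u = e.1 => hu (h ▸ hv), T.par_eq_none_of_not_mem u hu]
  par_mem u hu w s h := by
    split_ifs at h
    · have hw : e.2.1 = w := congrArg Prod.fst (Option.some_injective _ h)
      exact hw ▸ (mem_freeSlots.1 (mem_graftable.1 he).2.1).1
    · exact T.par_mem u hu w s h
  par_inj u hu u' hu' w s h h' := by
    have hfree := (mem_freeSlots.1 (mem_graftable.1 he).2.1).2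
    split_ifs at h h' with hv hv'
    · rw [hv, hv']
    · exact absurd (h'.trans h.symm) (hfree u')
    · exact absurd (h.trans h'.symm) (hfree u)
    · exact T.par_inj u hu u' hu' w s h h'
  reaches_root _ hu := by
    obtain ⟨-, hws, hwv⟩ := mem_graftable.1 he
    refine exists_par_iterate_eq_none (fun _ h => if_neg h) ?_ hu
    obtain ⟨k, hk⟩ := exists_par_iterate_eq_none_of_not_reaches (fun _ h => if_neg h)
      (mem_freeSlots.1 hws).1 hwv
    exact ⟨k + 1, by simpa [stepOf] using hk⟩

@[simp] theorem cut_verts : (T.cut v).verts = T.verts := rfl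

@[simp] theorem cut_par : (T.cut v).par u = if u = v then none else T.par u := rfl

@[simp] theorem graft_verts (he : e ∈ T.graftable) : (T.graft e he).verts = T.verts := rfl

@[simp] theorem graft_par (he : e ∈ T.graftable) :
    (T.graft e he).par u = if u = e.1 then some e.2 else T.par u := rfl

theorem roots_cut (hv : v ∈ T.verts) : (T.cut v).roots = insert v T.roots := by
  ext u
  by_cases hu : u = v <;> simp [mem_roots, hu, hv]

theorem card_roots_cut (he : e ∈ T.edges) : #(T.cut e.1).roots = #T.roots + 1 := by
  rw [mem_edges] at he
  rw [roots_cut (mem_verts_of_par_eq_some he), card_insert_of_notMem]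
  exact fun hr => by simp [(mem_roots.1 hr).2] at he

theorem roots_graft (he : e ∈ T.graftable) : (T.graft e he).roots = T.roots.erase e.1 := by
  ext u
  by_cases hu : u = e.1 <;> simp [mem_roots, hu]

theorem mem_graftable_cut (he : e ∈ T.edges) : e ∈ (T.cut e.1).graftable := by
  rw [mem_edges] at he
  have hv := mem_verts_of_par_eq_some he
  refine mem_graftable.2
    ⟨mem_roots.2 ⟨hv, if_pos rfl⟩, mem_freeSlots.2 ⟨T.par_mem _ hv _ _ he, ?_⟩, ?_⟩
  · intro u hu
    rw [cut_par] at hu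
    split_ifs at hu with huv
    exact huv (T.par_inj _ (mem_verts_of_par_eq_some hu) _ hv _ _ hu he)
  · rintro ⟨n, hn⟩
    have hagree : Set.EqOn T.step (T.cut e.1).step {e.1}ᶜ :=
      fun x hx => by simp [step, show x ≠ e.1 from hx]
    exact not_reaches_of_par_eq_some he (exists_iterate_eq_of_eqOn_compl hagree hn)

theorem mem_edges_graft (he : e ∈ T.graftable) : e ∈ (T.graft e he).edges :=
  mem_edges.2 (if_pos rfl)

theorem graft_cut (he : e ∈ T.edges) : (T.cut e.1).graft e (mem_graftable_cut he) = T := by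
  refine ext rfl (funext fun u => ?_)
  by_cases hu : u = e.1 <;> simp [hu, mem_edges.1 he]

theorem cut_graft (he : e ∈ T.graftable) : (T.graft e he).cut e.1 = T := by
  refine ext rfl (funext fun u => ?_)
  by_cases hu : u = e.1 <;> simp [hu, (mem_roots.1 (mem_graftable.1 he).1).2]

theorem par_eq_of_edges_eq {T T' : PForest p} (h : T.edges = T'.edges) : T.par = T'.par :=
  funext fun v => Option.ext fun ws => by
    rw [← mem_edges (e := (v, ws)), h, mem_edges]

theorem finite_verts_eq_and (S : Finset ℕ) (P : PForest p → Prop) :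
    Finite {T : PForest p // T.verts = S ∧ P T} :=
  Finite.of_injective (β := (S ×ˢ (S ×ˢ univ)).powerset)
    (fun T => ⟨T.1.edges, mem_powerset.2 (by obtain ⟨T, rfl, -⟩ := T; exact filter_subset _ _)⟩)
    fun T T' h => Subtype.ext (ext (T.2.1.trans T'.2.1.symm)
      (par_eq_of_edges_eq (congrArg Subtype.val h)))

variable (p) in
abbrev ForestsOn (S : Finset ℕ) (k : ℕ) : Type := {T : PForest p // T.verts = S ∧ #T.roots = k}

variable (p) in
noncomputable def cutEquiv (S : Finset ℕ) (k : ℕ) :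
    {x : PForest p × (ℕ × (ℕ × Fin p)) // (x.1.verts = S ∧ #x.1.roots = k) ∧ x.2 ∈ x.1.edges} ≃
    {x : PForest p × (ℕ × (ℕ × Fin p)) //
      (x.1.verts = S ∧ #x.1.roots = k + 1) ∧ x.2 ∈ x.1.graftable} where
  toFun x := ⟨(x.1.1.cut x.1.2.1, x.1.2),
    ⟨x.2.1.1, by rw [card_roots_cut x.2.2, x.2.1.2]⟩, mem_graftable_cut x.2.2⟩
  invFun x := ⟨(x.1.1.graft x.1.2 x.2.2, x.1.2),
    ⟨x.2.1.1, by rw [roots_graft, card_erase_of_mem (mem_graftable.1 x.2.2).1, x.2.1.2]; rfl⟩,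
    mem_edges_graft x.2.2⟩
  left_inv x := Subtype.ext (Prod.ext (graft_cut x.2.2) rfl)
  right_inv x := Subtype.ext (Prod.ext (cut_graft x.2.2) rfl)

theorem card_forestsOn_mul_sub (S : Finset ℕ) (k : ℕ) :
    Nat.card (ForestsOn p S k) * (#S - k) =
      Nat.card (ForestsOn p S (k + 1)) * ((#S * p - (#S - (k + 1))) * k) := by
  have := finite_verts_eq_and (p := p) S (#·.roots = k)
  have := finite_verts_eq_and (p := p) S (#·.roots = k + 1)
  have hcut := Nat.card_subtype_prod_mem_eq_mul (fun T : PForest p => T.verts = S ∧ #T.roots = k)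
    edges fun T hT => by rw [card_edges, hT.1, hT.2]
  have hgraft := Nat.card_subtype_prod_mem_eq_mul
    (fun T : PForest p => T.verts = S ∧ #T.roots = k + 1) graftable fun T hT => by
      rw [card_graftable, card_freeSlots, hT.1, hT.2, Nat.add_sub_cancel]
  exact hcut.symm.trans ((Nat.card_congr (cutEquiv p S k)).trans hgraft)

theorem card_forestsOn_card (S : Finset ℕ) : Nat.card (ForestsOn p S #S) = 1 := by
  let discrete : PForest p :=
    ⟨S, fun _ => none, fun _ _ => rfl, fun _ _ _ _ h => (nomatch h),
      fun _ _ _ _ _ _ h => (nomatch h), fun _ _ => ⟨0, rfl⟩⟩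
  have hdiscrete : discrete.roots = S := filter_true_of_mem fun _ _ => rfl
  have hpar : ∀ T : ForestsOn p S #S, T.1.par = fun _ => none := by
    rintro ⟨T, hverts, hroots⟩
    have hroots : T.roots = T.verts :=
      eq_of_subset_of_card_le (filter_subset _ _) (by rw [hroots, hverts])
    funext v
    by_cases hv : v ∈ T.verts
    · exact (mem_roots.1 (by rwa [hroots])).2
    · exact T.par_eq_none_of_not_mem v hv
  rw [Nat.card_eq_one_iff_unique]
  refine ⟨⟨fun T T' => Subtype.ext ?_⟩, ⟨⟨discrete, rfl, by rw [hdiscrete]⟩⟩⟩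
  exact ext (T.2.1.trans T'.2.1.symm) ((hpar T).trans (hpar T').symm)

end PForest

theorem eq_choose_mul_prod_of_mul_sub_eq (p n : ℕ) {g : ℕ → ℕ} (hn : g n = 1)
    (hrec : ∀ k < n, g k * (n - k) = g (k + 1) * ((n * p - (n - (k + 1))) * k)) {k : ℕ}
    (hk : k < n) : g k = n.choose k * (p * k) * ∏ i ∈ Icc 1 (n - k - 1), (p * n - i) := by
  obtain ⟨d, hd⟩ := Nat.exists_eq_add_of_lt hk
  induction d generalizing k with
  | zero =>
    subst hd
    have hg := hrec k (by omega)
    simp only [Nat.add_zero] at hn hg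
    simp [hn] at hg
    simp [hg]
    ring
  | succ d ih =>
    have hg := hrec k hk
    rw [ih (k := k + 1) (by omega) (by omega), show n - (k + 1) - 1 = d by omega,
      show n - (k + 1) = d + 1 by omega] at hg
    rw [show n - k - 1 = d + 1 by omega, prod_Icc_succ_top (by omega)]
    apply Nat.eq_of_mul_eq_mul_right (show 0 < n - k by omega)
    rw [hg, mul_comm n p]
    set P := ∏ i ∈ Icc 1 d, (p * n - i)
    calc n.choose (k + 1) * (p * (k + 1)) * P * ((p * n - (d + 1)) * k)
        = n.choose (k + 1) * (k + 1) * (p * k * P * (p * n - (d + 1))) := by ring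
      _ = n.choose k * (p * k) * (P * (p * n - (d + 1))) * (n - k) := by
        rw [Nat.choose_succ_right_eq]; ring

theorem stmt7_general (p n k : ℕ) (hkn : k < n) :
    f p n k = n.choose k * (p * k) * ∏ i ∈ Finset.Icc 1 (n - k - 1), (p * n - i) := by
  have hcard : #(Icc 1 n) = n := by simp
  refine eq_choose_mul_prod_of_mul_sub_eq p n
    (g := fun k => Nat.card (PForest.ForestsOn p (Icc 1 n) k)) ?_ (fun k _ => ?_) hkn
  · simpa [hcard] using PForest.card_forestsOn_card (p := p) (Icc 1 n)
  · simpa [hcard] using PForest.card_forestsOn_mul_sub (p := p) (Icc 1 n) k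

/-- For `0 ≤ k < n`, the number of unordered forests on `[n]` of `k` `p`-ary
labeled trees equals `binom(n,k) · pk · ∏_{i=1}^{n-k-1} (pn - i)`. -/
theorem stmt7 (p n k : ℕ) (hp : 2 ≤ p) (hkn : k < n) :
    f p n k = n.choose k * (p * k) * ∏ i ∈ Finset.Icc 1 (n - k - 1), (p * n - i) :=
  stmt7_general p n k hkn
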